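/- arXiv:2507.14834 — 4 statements merged into one kernel-verified Lean document; each statement's English description precedes it below -/
import Mathlib

section
/- Let G be a group, c ∈ G central with c² = 1, and define b_{σ,τ} as above. For a subset Φ ⊆ G set B_Φ = Σ_{σ∈Φ} Σ_{τ∈Φ} b_{σ,τ}. Suppose Φ = Ψ ∪ {α, β} with α, β ∉ Ψ, α ≠ β, and set Φ₀₀ = Φ, Φ₀₁ = Ψ ∪ {α, cβ}, Φ₁₀ = Ψ ∪ {cα, β}, Φ₁₁ = Ψ ∪ {cα, cβ}. Assume that the four sets Ψ, {α, cα}, {β, cβ} are pairwise disjoint (so all the unions above are disjoint and have cardinality |Ψ| + 2). Then B_{Φ₀₀} - B_{Φ₁₀} - B_{Φ₀₁} + B_{Φ₁₁} = 4·(b_{α,β} + b_{β,α}) as functions G → ℤ. -/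
/-- `b_{σ,τ}(g) = 1` if `gσ = τ`, `-1` if `gσ = cτ`, `0` otherwise. -/
def bfun {G : Type*} [Group G] [DecidableEq G] (c σ τ : G) : G → ℤ :=
  fun g => if g * σ = τ then 1 else if g * σ = c * τ then -1 else 0

/-- `B_Φ = Σ_{σ∈Φ} Σ_{τ∈Φ} b_{σ,τ}`. -/
def Bfun {G : Type*} [Group G] [DecidableEq G] (c : G) (Φ : Finset G) : G → ℤ :=
  fun g => ∑ σ ∈ Φ, ∑ τ ∈ Φ, bfun c σ τ g

/-!
Each `B_Φ` is a double sum over `Φ × Φ`, so in the alternating sum of the four `B`'s every term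
involving `Ψ`, and every diagonal term, occurs once with each sign and cancels. What remains are
the off-diagonal terms `b_{x,y} + b_{y,x}` with `x ∈ {α, cα}`, `y ∈ {β, cβ}`; replacing `α`
by `cα` (or `β` by `cβ`) flips the sign of `b`, so these add up to `4 (b_{α,β} + b_{β,α})`.
-/

open Finset

section DoubleSum

variable {G M : Type*} [DecidableEq G]

lemma sum_sum_union_pair [AddCommMonoid M] (f : G → G → M) {Ψ : Finset G} {x y : G}
    (hxy : x ≠ y) (hΨ : Disjoint Ψ {x, y}) :
    ∑ σ ∈ Ψ ∪ {x, y}, ∑ τ ∈ Ψ ∪ {x, y}, f σ τ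
      = (∑ σ ∈ Ψ, ∑ τ ∈ Ψ, f σ τ) + (∑ σ ∈ Ψ, (f σ x + f σ y)) + (∑ τ ∈ Ψ, (f x τ + f y τ))
        + (f x x + f y y) + (f x y + f y x) := by
  simp only [sum_union hΨ, sum_pair hxy, sum_add_distrib]
  abel

lemma sum_sum_union_pair_sub_sub_add [AddCommGroup M] (f : G → G → M) {Ψ : Finset G}
    {x x' y y' : G} (hx : Disjoint Ψ {x, x'}) (hy : Disjoint Ψ {y, y'})
    (hxy : Disjoint ({x, x'} : Finset G) {y, y'}) :
    (∑ σ ∈ Ψ ∪ {x, y}, ∑ τ ∈ Ψ ∪ {x, y}, f σ τ)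
      - (∑ σ ∈ Ψ ∪ {x', y}, ∑ τ ∈ Ψ ∪ {x', y}, f σ τ)
      - (∑ σ ∈ Ψ ∪ {x, y'}, ∑ τ ∈ Ψ ∪ {x, y'}, f σ τ)
      + (∑ σ ∈ Ψ ∪ {x', y'}, ∑ τ ∈ Ψ ∪ {x', y'}, f σ τ)
      = (f x y - f x' y - f x y' + f x' y') + (f y x - f y x' - f y' x + f y' x') := by
  have hne : ∀ a ∈ ({x, x'} : Finset G), ∀ b ∈ ({y, y'} : Finset G), a ≠ b :=
    fun a ha b hb hab => disjoint_left.mp hxy ha (hab ▸ hb)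
  have hdisj : ∀ a ∈ ({x, x'} : Finset G), ∀ b ∈ ({y, y'} : Finset G), Disjoint Ψ {a, b} :=
    fun a ha b hb => disjoint_insert_right.mpr
      ⟨disjoint_right.mp hx ha, disjoint_singleton_right.mpr (disjoint_right.mp hy hb)⟩
  have hmem : x ∈ ({x, x'} : Finset G) ∧ x' ∈ ({x, x'} : Finset G) ∧
      y ∈ ({y, y'} : Finset G) ∧ y' ∈ ({y, y'} : Finset G) := by simp
  obtain ⟨hx₀, hx₁, hy₀, hy₁⟩ := hmem
  rw [sum_sum_union_pair f (hne _ hx₀ _ hy₀) (hdisj _ hx₀ _ hy₀),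
    sum_sum_union_pair f (hne _ hx₁ _ hy₀) (hdisj _ hx₁ _ hy₀),
    sum_sum_union_pair f (hne _ hx₀ _ hy₁) (hdisj _ hx₀ _ hy₁),
    sum_sum_union_pair f (hne _ hx₁ _ hy₁) (hdisj _ hx₁ _ hy₁)]
  simp only [sum_add_distrib]
  abel

end DoubleSum

section Sign

variable {G : Type*} [Group G] [DecidableEq G] {c : G}

lemma bfun_mul_right (hc2 : c * c = 1) (hc : c ≠ 1) (σ τ : G) :
    bfun c σ (c * τ) = -bfun c σ τ := by
  have hcτ : c * τ ≠ τ := fun h => hc (mul_eq_right.mp h)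
  have hccτ : c * (c * τ) = τ := by rw [← mul_assoc, hc2, one_mul]
  funext g
  simp only [bfun, Pi.neg_apply, hccτ]
  split_ifs <;> simp_all

lemma bfun_mul_left (hcentral : ∀ x : G, c * x = x * c) (hc2 : c * c = 1) (hc : c ≠ 1)
    (σ τ : G) : bfun c (c * σ) τ = -bfun c σ τ := by
  have hcτ : c * τ ≠ τ := fun h => hc (mul_eq_right.mp h)
  have hcc : ∀ a, c * (c * a) = a := fun a => by rw [← mul_assoc, hc2, one_mul]
  funext g
  have hmul : g * (c * σ) = c * (g * σ) := by
    rw [hcentral σ, ← mul_assoc, hcentral (g * σ)]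
  have h₁ : c * (g * σ) = τ ↔ g * σ = c * τ := by
    constructor
    · rintro rfl; rw [hcc]
    · rintro h; rw [h, hcc]
  have h₂ : c * (g * σ) = c * τ ↔ g * σ = τ := mul_right_inj c
  simp only [bfun, Pi.neg_apply, hmul, h₁, h₂]
  split_ifs <;> simp_all

end Sign

theorem stmt3_general {G : Type*} [Group G] [DecidableEq G] (c : G)
    (hcentral : ∀ x : G, c * x = x * c) (hc2 : c * c = 1)
    (Ψ : Finset G) (α β : G)
    (hα : c * α ≠ α)
    (hdisj1 : Disjoint Ψ ({α, c * α} : Finset G))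
    (hdisj2 : Disjoint Ψ ({β, c * β} : Finset G))
    (hdisj3 : Disjoint ({α, c * α} : Finset G) ({β, c * β} : Finset G)) :
    Bfun c (Ψ ∪ {α, β}) - Bfun c (Ψ ∪ {c * α, β}) - Bfun c (Ψ ∪ {α, c * β})
      + Bfun c (Ψ ∪ {c * α, c * β})
      = fun g => 4 * (bfun c α β g + bfun c β α g) := by
  have hc : c ≠ 1 := fun h => hα (by rw [h, one_mul])
  funext g
  have key := sum_sum_union_pair_sub_sub_add (fun σ τ => bfun c σ τ g) hdisj1 hdisj2 hdisj3
  simp only [bfun_mul_left hcentral hc2 hc, bfun_mul_right hc2 hc, Pi.neg_apply] at key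
  simp only [Pi.add_apply, Pi.sub_apply, Bfun, key]
  ring

theorem stmt3 {G : Type*} [Group G] [DecidableEq G] (c : G)
    (hcentral : ∀ x : G, c * x = x * c) (hc2 : c * c = 1)
    (Ψ : Finset G) (α β : G) (hαβ : α ≠ β)
    (hα : c * α ≠ α) (hβ : c * β ≠ β) (hΨ : ∀ σ ∈ Ψ, c * σ ≠ σ)
    (hdisj1 : Disjoint Ψ ({α, c * α} : Finset G))
    (hdisj2 : Disjoint Ψ ({β, c * β} : Finset G))
    (hdisj3 : Disjoint ({α, c * α} : Finset G) ({β, c * β} : Finset G)) :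
    Bfun c (Ψ ∪ {α, β}) - Bfun c (Ψ ∪ {c * α, β}) - Bfun c (Ψ ∪ {α, c * β})
      + Bfun c (Ψ ∪ {c * α, c * β})
      = fun g => 4 * (bfun c α β g + bfun c β α g) :=
  stmt3_general c hcentral hc2 Ψ α β hα hdisj1 hdisj2 hdisj3
end

section
/- Let G be a finite group and c ∈ G a central element of order exactly 2. A CM type is a subset Φ ⊆ G containing exactly one element of each coset {g, cg}. Let V ⊆ Maps(G, ℚ) be the space of functions a with a(cg) = -a(g) for all g, and let W ⊆ V be the subspace of functions that are moreover even, i.e. a(g⁻¹) = a(g) for all g. Then the ℚ-linear span of the functions B_Φ = Σ_{σ,τ∈Φ} b_{σ,τ}, taken over all CM types Φ, equals W. -/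
/-!
For a CM type `Φ` let `ε = ∑_{τ ∈ Φ} e_τ`, where `e_τ = δ_τ - δ_{cτ}`; this is the `±1`-valued
`c`-odd function equal to `1` exactly on `Φ`. Since `b_{σ,τ}(g) = e_τ(gσ)`, one gets
`B_Φ = ½ ε ⋆ ε` for the correlation `(f₁ ⋆ f₂)(g) = ∑_σ f₁(σ) f₂(gσ)`, and correlations of
odd functions are odd and even. Conversely, `ε ↦ ε ⋆ ε` is quadratic, so polarizing it over the
four sign functions obtained from `ε` by flipping its signs on `{1, c}` and/or on `{y, cy}` produces
`e_y + e_y ∘ inv` for every `y ∉ {1, c}`. The expansion of `ε ⋆ ε` in these functions then yields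
`e_1 + e_1 ∘ inv` too, its coefficient being `(ε ⋆ ε)(1) = |G| ≠ 0`, and together they span `W`.
-/

/-- The ℚ-valued version of `b_{σ,τ}`: `1` if `gσ = τ`, `-1` if `gσ = cτ`, `0` otherwise. -/
def bQ {G : Type*} [Group G] [DecidableEq G] (c σ τ : G) : G → ℚ :=
  fun g => if g * σ = τ then 1 else if g * σ = c * τ then -1 else 0

open Finset

namespace CMType

variable {G : Type*} [Group G] {c : G}

lemma eq_mul_iff_eq_mul_of_mul_self_eq_one (hc2 : c * c = 1) {g h : G} :
    g = c * h ↔ h = c * g := by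
  constructor <;> rintro rfl <;> simp [← mul_assoc, hc2]

section Correlation

variable [Fintype G] (R : Type*) [CommRing R]

def correlation : (G → R) →ₗ[R] (G → R) →ₗ[R] G → R :=
  LinearMap.mk₂ R (fun f₁ f₂ g => ∑ σ, f₁ σ * f₂ (g * σ))
    (fun _ _ _ => by ext; simp [add_mul, sum_add_distrib])
    (fun _ _ _ => by ext; simp [mul_assoc, mul_sum])
    (fun _ _ _ => by ext; simp [mul_add, sum_add_distrib])
    (fun _ _ _ => by ext; simp [mul_left_comm, mul_sum])

variable {R}

lemma correlation_apply (f₁ f₂ : G → R) (g : G) :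
    correlation R f₁ f₂ g = ∑ σ, f₁ σ * f₂ (g * σ) := rfl

lemma correlation_apply_inv (f₁ f₂ : G → R) (g : G) :
    correlation R f₁ f₂ g⁻¹ = correlation R f₂ f₁ g :=
  Fintype.sum_equiv (Equiv.mulLeft g⁻¹) _ _ fun σ => by simp [mul_comm]

lemma correlation_apply_mul_left {f₁ f₂ : G → R} (hf₂ : ∀ g, f₂ (c * g) = -f₂ g) (g : G) :
    correlation R f₁ f₂ (c * g) = -correlation R f₁ f₂ g := by
  simp [correlation_apply, mul_assoc, hf₂]

lemma correlation_polarization (f u v : G → R) :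
    correlation R f f - correlation R (f - v) (f - v) - correlation R (f - u) (f - u)
        + correlation R (f - u - v) (f - u - v)
      = correlation R u v + correlation R v u := by
  simp only [map_sub, LinearMap.sub_apply]
  abel

end Correlation

section OddEven

variable (R : Type*) [CommRing R]

def oddEvenSubmodule (c : G) : Submodule R (G → R) where
  carrier := {a | (∀ g : G, a (c * g) = -a g) ∧ ∀ g : G, a g⁻¹ = a g}
  add_mem' ha hb := ⟨fun g => by simp [ha.1, hb.1, add_comm], fun g => by simp [ha.2, hb.2]⟩
  zero_mem' := ⟨fun _ => by simp, fun _ => by simp⟩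
  smul_mem' r a ha := ⟨fun g => by simp [ha.1], fun g => by simp [ha.2]⟩

variable {R}

lemma correlation_mem_oddEvenSubmodule [Fintype G] {f : G → R} (hf : ∀ g, f (c * g) = -f g) :
    correlation R f f ∈ oddEvenSubmodule R c :=
  ⟨correlation_apply_mul_left hf, fun g => correlation_apply_inv f f g⟩

end OddEven

section OddDelta

variable [DecidableEq G] (R : Type*) [CommRing R]

def oddDelta (c x : G) : G → R := Pi.single x 1 - Pi.single (c * x) 1

def oddEvenDelta (c x : G) : G → R := fun g => oddDelta R c x g + oddDelta R c x g⁻¹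

variable {R}

lemma oddDelta_mul_left (hc2 : c * c = 1) (x g : G) :
    oddDelta R c x (c * g) = -oddDelta R c x g := by
  have h : c * g = x ↔ g = c * x := by rw [eq_comm, eq_mul_iff_eq_mul_of_mul_self_eq_one hc2]
  simp only [oddDelta, Pi.sub_apply, Pi.single_apply, mul_right_inj, h]
  split_ifs <;> simp

lemma sum_oddDelta_mul_left (hc2 : c * c = 1) (Φ : Finset G) (g : G) :
    (∑ τ ∈ Φ, oddDelta R c τ) (c * g) = -(∑ τ ∈ Φ, oddDelta R c τ) g := by
  simp [Finset.sum_apply, oddDelta_mul_left hc2]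

lemma oddDelta_self (hc2 : c * c = 1) : oddDelta R c c = -oddDelta R c 1 := by
  simp [oddDelta, hc2]

lemma oddEvenDelta_self (hc2 : c * c = 1) : oddEvenDelta R c c = -oddEvenDelta R c 1 := by
  ext g
  simp only [oddEvenDelta, oddDelta_self hc2, Pi.neg_apply, neg_add]

variable [Fintype G]

lemma correlation_oddDelta_left (hcentral : ∀ x : G, c * x = x * c) {f : G → R}
    (hf : ∀ g, f (c * g) = -f g) (x g : G) :
    correlation R (oddDelta R c x) f g = 2 * f (g * x) := by
  have h : g * (c * x) = c * (g * x) := by rw [← mul_assoc, ← hcentral, mul_assoc]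
  simp [correlation_apply, oddDelta, Pi.single_apply, ite_mul, h, hf]
  ring

lemma correlation_oddDelta_one_add (hcentral : ∀ x : G, c * x = x * c) (hc2 : c * c = 1)
    (y : G) :
    correlation R (oddDelta R c 1) (oddDelta R c y)
        + correlation R (oddDelta R c y) (oddDelta R c 1)
      = (2 : R) • oddEvenDelta R c y := by
  ext g
  have hy := oddDelta_mul_left (R := R) hc2 y
  rw [Pi.add_apply, ← correlation_apply_inv (oddDelta R c 1) (oddDelta R c y),
    correlation_oddDelta_left hcentral hy, correlation_oddDelta_left hcentral hy]
  simp only [oddEvenDelta, Pi.smul_apply, smul_eq_mul, mul_one]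
  ring

lemma sum_smul_oddDelta (hc2 : c * c = 1) {a : G → R} (ha : ∀ g, a (c * g) = -a g) :
    ∑ h, a h • oddDelta R c h = (2 : R) • a := by
  ext g
  simp [oddDelta, Pi.single_apply, mul_sub, sum_sub_distrib,
    eq_mul_iff_eq_mul_of_mul_self_eq_one hc2, ha]
  ring

lemma sum_smul_oddEvenDelta (hc2 : c * c = 1) {a : G → R} (ha : a ∈ oddEvenSubmodule R c) :
    ∑ h, a h • oddEvenDelta R c h = (4 : R) • a := by
  ext g
  have h := congrFun (sum_smul_oddDelta hc2 ha.1)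
  simp only [Finset.sum_apply, Pi.smul_apply, smul_eq_mul] at h
  simp only [oddEvenDelta, Finset.sum_apply, Pi.smul_apply, smul_eq_mul, mul_add,
    sum_add_distrib, h, ha.2]
  ring

end OddDelta

structure IsCMSign {R : Type*} [Ring R] (c : G) (ε : G → R) : Prop where
  map_mul_left : ∀ g, ε (c * g) = -ε g
  eq_one_or_eq_neg_one : ∀ g, ε g = 1 ∨ ε g = -1

section Sign

variable {R : Type*} [CommRing R]

lemma exists_isCMSign [Countable G] (hc2 : c * c = 1) (hc1 : c ≠ 1) :
    ∃ ε : G → R, IsCMSign c ε := by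
  obtain ⟨n, hn⟩ := exists_injective_nat G
  refine ⟨fun g => if n g < n (c * g) then 1 else -1, fun g => ?_,
    fun g => by split_ifs <;> simp⟩
  have hne : n g ≠ n (c * g) := hn.ne fun h => hc1 (by simpa using h.symm)
  rw [← mul_assoc, hc2, one_mul]
  rcases hne.lt_or_gt with h | h <;> simp [h, h.not_gt]

lemma IsCMSign.sub_smul_oddDelta [DecidableEq G] {ε : G → R} (hε : IsCMSign c ε)
    (hc2 : c * c = 1) {x : G} (hx : c * x ≠ x) :
    IsCMSign c (ε - (2 * ε x) • oddDelta R c x) where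
  map_mul_left g := by
    simp [oddDelta_mul_left hc2, hε.map_mul_left]
    ring
  eq_one_or_eq_neg_one g := by
    have : (ε - (2 * ε x) • oddDelta R c x) g = ε g ∨
        (ε - (2 * ε x) • oddDelta R c x) g = -ε g := by
      by_cases hgx : g = x
      · subst hgx
        right
        simp [oddDelta, hx.symm]
        ring
      by_cases hgcx : g = c * x
      · subst hgcx
        right
        simp [oddDelta, hx, hε.map_mul_left]
        ring
      · left
        simp [oddDelta, hgx, hgcx]
    rcases this with h | h <;> rw [h] <;>
      rcases hε.eq_one_or_eq_neg_one g with h' | h' <;> simp [h']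

end Sign

section Field

variable {K : Type*} [Field K] [CharZero K] [Fintype G] [DecidableEq G]

lemma IsCMSign.exists_eq_sum_oddDelta {ε : G → K} (hε : IsCMSign c ε) (hc2 : c * c = 1) :
    ∃ Φ : Finset G, (∀ g, g ∈ Φ ↔ c * g ∉ Φ) ∧ ε = ∑ τ ∈ Φ, oddDelta K c τ := by
  classical
  refine ⟨univ.filter (ε · = 1), fun g => ?_, ?_⟩
  · rcases hε.eq_one_or_eq_neg_one g with h | h <;> simp [hε.map_mul_left, h] <;> norm_num
  · ext g
    rcases hε.eq_one_or_eq_neg_one g with h | h <;>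
      simp [oddDelta, Pi.single_apply, sum_sub_distrib, eq_mul_iff_eq_mul_of_mul_self_eq_one hc2,
        hε.map_mul_left, h] <;> norm_num

section Span

variable {T : Submodule K (G → K)} (hcentral : ∀ x : G, c * x = x * c) (hc2 : c * c = 1)
  (hc1 : c ≠ 1) (hT : ∀ ε, IsCMSign c ε → correlation K ε ε ∈ T)
include hcentral hc2 hc1 hT

lemma oddEvenDelta_mem_of_ne {y : G} (hy1 : y ≠ 1) (hyc : y ≠ c) : oddEvenDelta K c y ∈ T := by
  obtain ⟨ε, hε⟩ := exists_isCMSign (R := K) hc2 hc1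
  set u := (2 * ε 1) • oddDelta K c 1
  set v := (2 * ε y) • oddDelta K c y
  have hcy : c * y ≠ y := fun h => hc1 (mul_eq_right.1 h)
  have hu : IsCMSign c (ε - u) := hε.sub_smul_oddDelta hc2 (by simpa using hc1)
  have hv : IsCMSign c (ε - v) := hε.sub_smul_oddDelta hc2 hcy
  have huv : IsCMSign c (ε - u - v) := by
    have hy : (ε - u) y = ε y := by simp [u, oddDelta, hy1, hyc]
    simpa [hy] using hu.sub_smul_oddDelta hc2 hcy
  have hsym : correlation K u v + correlation K v u
      = (8 * (ε 1 * ε y)) • oddEvenDelta K c y := by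
    simp only [u, v, map_smul, LinearMap.smul_apply]
    linear_combination (norm := module)
      (4 * (ε 1 * ε y)) • correlation_oddDelta_one_add (R := K) hcentral hc2 y
  have hmem : (8 * (ε 1 * ε y)) • oddEvenDelta K c y ∈ T := by
    rw [← hsym, ← correlation_polarization]
    exact T.add_mem (T.sub_mem (T.sub_mem (hT ε hε) (hT _ hv)) (hT _ hu)) (hT _ huv)
  refine (T.smul_mem_iff ?_).1 hmem
  rcases hε.eq_one_or_eq_neg_one 1 with h | h <;>
    rcases hε.eq_one_or_eq_neg_one y with h' | h' <;> norm_num [h, h']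

lemma oddEvenDelta_one_mem : oddEvenDelta K c 1 ∈ T := by
  obtain ⟨ε, hε⟩ := exists_isCMSign (R := K) hc2 hc1
  set a := correlation K ε ε
  have ha : a ∈ oddEvenSubmodule K c := correlation_mem_oddEvenSubmodule hε.map_mul_left
  have ha1 : a 1 = Fintype.card G := by
    have h : ∀ σ, ε σ * ε σ = 1 := fun σ => by
      rcases hε.eq_one_or_eq_neg_one σ with h | h <;> simp [h]
    simp [a, correlation_apply, h]
  have hac : a c = -a 1 := by simpa using ha.1 1
  have hrest : ∑ h ∈ (univ.erase 1).erase c, a h • oddEvenDelta K c h ∈ T :=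
    T.sum_mem fun h hh => T.smul_mem _ <| oddEvenDelta_mem_of_ne hcentral hc2 hc1 hT
      (ne_of_mem_erase (mem_of_mem_erase hh)) (ne_of_mem_erase hh)
  have hsum := sum_smul_oddEvenDelta hc2 ha
  rw [← add_sum_erase _ _ (mem_univ 1), ← add_sum_erase _ _ (mem_erase.2 ⟨hc1, mem_univ c⟩),
    hac, oddEvenDelta_self hc2, ← add_assoc, neg_smul_neg, ← two_smul K, smul_smul] at hsum
  have hmem : (2 * a 1) • oddEvenDelta K c 1 ∈ T := by
    rw [eq_sub_of_add_eq hsum]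
    exact T.sub_mem (T.smul_mem _ (hT ε hε)) hrest
  refine (T.smul_mem_iff ?_).1 hmem
  rw [ha1]
  exact mul_ne_zero two_ne_zero (Nat.cast_ne_zero.2 Fintype.card_ne_zero)

theorem oddEvenSubmodule_le : oddEvenSubmodule K c ≤ T := by
  have hw : ∀ y, oddEvenDelta K c y ∈ T := by
    intro y
    by_cases hy1 : y = 1
    · exact hy1 ▸ oddEvenDelta_one_mem hcentral hc2 hc1 hT
    by_cases hyc : y = c
    · rw [hyc, oddEvenDelta_self hc2]
      exact T.neg_mem (oddEvenDelta_one_mem hcentral hc2 hc1 hT)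
    exact oddEvenDelta_mem_of_ne hcentral hc2 hc1 hT hy1 hyc
  intro a ha
  have h4a : (4 : K) • a ∈ T := by
    rw [← sum_smul_oddEvenDelta hc2 ha]
    exact T.sum_mem fun h _ => T.smul_mem _ (hw h)
  exact (T.smul_mem_iff (by norm_num)).1 h4a

end Span

end Field

section BQ

variable [DecidableEq G]

lemma bQ_eq_oddDelta (hc1 : c ≠ 1) (σ τ g : G) : bQ c σ τ g = oddDelta ℚ c τ (g * σ) := by
  have hτ : τ ≠ c * τ := fun h => hc1 (mul_eq_right.1 h.symm)
  simp only [bQ, oddDelta, Pi.sub_apply, Pi.single_apply]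
  split_ifs <;> simp_all

lemma sum_bQ_eq_correlation [Fintype G] (hcentral : ∀ x : G, c * x = x * c) (hc2 : c * c = 1)
    (hc1 : c ≠ 1) (Φ : Finset G) :
    (fun g => ∑ σ ∈ Φ, ∑ τ ∈ Φ, bQ c σ τ g)
      = (2 : ℚ)⁻¹ • correlation ℚ (∑ τ ∈ Φ, oddDelta ℚ c τ) (∑ τ ∈ Φ, oddDelta ℚ c τ) := by
  ext g
  rw [Pi.smul_apply, map_sum (correlation ℚ), LinearMap.sum_apply, Finset.sum_apply]
  simp only [correlation_oddDelta_left hcentral (sum_oddDelta_mul_left hc2 Φ), ← mul_sum,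
    smul_eq_mul, Finset.sum_apply, bQ_eq_oddDelta hc1]
  ring

end BQ

end CMType

open CMType in
theorem stmt4 {G : Type*} [Group G] [Fintype G] [DecidableEq G] (c : G)
    (hcentral : ∀ x : G, c * x = x * c) (hc2 : c * c = 1) (hc1 : c ≠ 1) :
    (Submodule.span ℚ
        {B : G → ℚ | ∃ Φ : Finset G, (∀ g : G, g ∈ Φ ↔ c * g ∉ Φ) ∧
          B = fun g => ∑ σ ∈ Φ, ∑ τ ∈ Φ, bQ c σ τ g} : Set (G → ℚ))
      = {a : G → ℚ | (∀ g : G, a (c * g) = -a g) ∧ ∀ g : G, a g⁻¹ = a g} := by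
  set S := {B : G → ℚ | ∃ Φ : Finset G, (∀ g : G, g ∈ Φ ↔ c * g ∉ Φ) ∧
    B = fun g => ∑ σ ∈ Φ, ∑ τ ∈ Φ, bQ c σ τ g}
  suffices Submodule.span ℚ S = oddEvenSubmodule ℚ c from congrArg SetLike.coe this
  refine le_antisymm (Submodule.span_le.2 ?_)
    (oddEvenSubmodule_le hcentral hc2 hc1 fun ε hε => ?_)
  · rintro _ ⟨Φ, -, rfl⟩
    rw [sum_bQ_eq_correlation hcentral hc2 hc1]
    exact Submodule.smul_mem _ _ (correlation_mem_oddEvenSubmodule (sum_oddDelta_mul_left hc2 Φ))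
  · obtain ⟨Φ, hΦ, rfl⟩ := hε.exists_eq_sum_oddDelta hc2
    have hB : _ ∈ Submodule.span ℚ S :=
      Submodule.subset_span ⟨Φ, hΦ, (sum_bQ_eq_correlation hcentral hc2 hc1 Φ).symm⟩
    simpa using Submodule.smul_mem _ (2 : ℚ) hB
end

section
/- Let G be a finite group and c ∈ G a central element of order exactly 2. Let M be the ℤ-module of functions a : G → ℤ such that g ↦ a(g) + a(cg) is constant on G. Let C ⊆ M be the submodule of constant functions and M₋ ⊆ M the submodule of functions with a(cg) = -a(g). Then C ∩ M₋ = 0 and the submodule C ⊕ M₋ has index 2 in M, i.e. M/(C + M₋) ≅ ℤ/2ℤ. -/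
section
variable {G : Type*} [Group G] (c : G)

/-- `a : G → ℤ` lies in `M` iff `g ↦ a(g) + a(cg)` is constant. -/
def memM (a : G → ℤ) : Prop := ∃ k : ℤ, ∀ g : G, a g + a (c * g) = k

/-- `a` is a constant function. -/
def memC (a : G → ℤ) : Prop := ∃ k : ℤ, ∀ g : G, a g = k

/-- `a` is anti-invariant: `a(cg) = -a(g)`. -/
def memMminus (a : G → ℤ) : Prop := ∀ g : G, a (c * g) = -a g

/-- `a` lies in the sum `C + M₋`. -/
def memSum (a : G → ℤ) : Prop :=
  ∃ u v : G → ℤ, memC u ∧ memMminus c v ∧ a = u + v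

end

/-!
A constant anti-invariant function has a value `k = -k`, so it vanishes. For the index,
`a ∈ M` with `a g + a (c g) = k` lies in `C + M₋` iff `k` is even (take `u = k / 2` and
`v = a - u`). Since `g ↦ c g` is a fixed-point-free involution, ordering `G` arbitrarily and
marking every `g` with `g < c g` gives an `m ∈ M` with constant sum `1`, so `m` represents the
nontrivial coset and `a` or `a - m` has even sum.
-/

theorem Function.Involutive.exists_add_comp_eq_one {α : Type*} {σ : α → α}
    (hσ : Function.Involutive σ) (hfix : ∀ x, σ x ≠ x) :
    ∃ m : α → ℤ, ∀ x, m x + m (σ x) = 1 := by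
  let : LinearOrder α := WellOrderingRel.isWellOrder.linearOrder
  refine ⟨fun x => if x < σ x then 1 else 0, fun x => ?_⟩
  simp only [hσ x]
  rcases lt_trichotomy x (σ x) with hlt | heq | hgt
  · simp [hlt, hlt.not_gt]
  · exact absurd heq.symm (hfix x)
  · simp [hgt, hgt.not_gt]

section
variable {G : Type*} [Group G] {c : G}

theorem eq_zero_of_memC_of_memMminus {a : G → ℤ} (hC : memC a) (hM : memMminus c a) :
    a = 0 := by
  obtain ⟨k, hk⟩ := hC
  have hk0 : k = 0 := by
    have := hM 1
    rw [hk, hk] at this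
    omega
  funext g
  simp [hk g, hk0]

theorem memSum_iff {a : G → ℤ} :
    memSum c a ↔ ∃ t : ℤ, ∀ g, a g + a (c * g) = 2 * t := by
  constructor
  · rintro ⟨u, v, ⟨t, hu⟩, hv, rfl⟩
    refine ⟨t, fun g => ?_⟩
    simp only [Pi.add_apply, hu, hv g]
    ring
  · rintro ⟨t, ht⟩
    refine ⟨fun _ => t, a - fun _ => t, ⟨t, fun _ => rfl⟩, fun g => ?_, by abel⟩
    have := ht g
    simp only [Pi.sub_apply]
    omega

end

theorem stmt6_general {G : Type*} [Group G] (c : G)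
    (hc2 : c * c = 1) (hc1 : c ≠ 1) :
    (∀ a : G → ℤ, memC a → memMminus c a → a = 0) ∧
    (∃ m : G → ℤ, memM c m ∧ ¬ memSum c m ∧
      ∀ a : G → ℤ, memM c a → (memSum c a ∨ memSum c (a - m))) := by
  have hinv : Function.Involutive (c * ·) := fun g => by simp [← mul_assoc, hc2]
  have hfix : ∀ g : G, c * g ≠ g := fun g h => hc1 (by simpa using h)
  obtain ⟨m, hm⟩ := hinv.exists_add_comp_eq_one hfix
  refine ⟨fun a => eq_zero_of_memC_of_memMminus, m, ⟨1, hm⟩, ?_, ?_⟩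
  · intro hsum
    obtain ⟨t, ht⟩ := memSum_iff.mp hsum
    have := (hm 1).symm.trans (ht 1)
    omega
  · rintro a ⟨k, hk⟩
    rcases Int.even_or_odd' k with ⟨t, rfl | rfl⟩
    · exact .inl (memSum_iff.mpr ⟨t, hk⟩)
    · refine .inr (memSum_iff.mpr ⟨t, fun g => ?_⟩)
      have := hm g
      have := hk g
      simp only [Pi.sub_apply]
      omega

theorem stmt6 {G : Type*} [Group G] [Fintype G] (c : G)
    (hcentral : ∀ x : G, c * x = x * c) (hc2 : c * c = 1) (hc1 : c ≠ 1) :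
    (∀ a : G → ℤ, memC a → memMminus c a → a = 0) ∧
    (∃ m : G → ℤ, memM c m ∧ ¬ memSum c m ∧
      ∀ a : G → ℤ, memM c a → (memSum c a ∨ memSum c (a - m))) :=
  stmt6_general c hc2 hc1
end

section
/- Let G be a finite group and c ∈ G central of order exactly 2. Let V₋ be the ℚ-vector space of functions a : G → ℚ with a(cg) = -a(g) for all g. Then every even function in V₋ (i.e. a(g⁻¹) = a(g) for all g) is a ℚ-linear combination of the functions b_{σ,τ} + b_{τ,σ} for σ, τ ∈ G, where b_{σ,τ}(g) = 1 if gσ = τ, -1 if gσ = cτ, 0 otherwise. -/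
section

variable {G : Type*} [Group G] [DecidableEq G] {c : G}

lemma bQ_eq_bQ_one (σ τ : G) : bQ c σ τ = bQ c 1 (τ * σ⁻¹) := by
  funext g
  simp only [bQ, mul_one, ← eq_mul_inv_iff_mul_eq, mul_assoc]

lemma bQ_one_apply (hc : c ≠ 1) (h g : G) :
    bQ c 1 h g = (if h = g then 1 else 0) - (if h = c⁻¹ * g then 1 else 0) := by
  have hcg : c⁻¹ * g ≠ g := fun h' => hc (inv_eq_one.mp (mul_eq_right.mp h'))
  simp only [bQ, mul_one, eq_comm (a := g), ← inv_mul_eq_iff_eq_mul]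
  split_ifs <;> simp_all

variable [Fintype G]

lemma sum_mul_bQ_one (hc : c ≠ 1) (a : G → ℚ) (g : G) :
    ∑ h, a h * bQ c 1 h g = a g - a (c⁻¹ * g) := by
  simp [bQ_one_apply hc, mul_sub, Finset.sum_sub_distrib]

lemma sum_mul_bQ_one_right_of_even {a : G → ℚ} (heven : ∀ g, a g⁻¹ = a g) (g : G) :
    ∑ h, a h * bQ c h 1 g = ∑ h, a h * bQ c 1 h g := by
  simp only [bQ_eq_bQ_one _ (1 : G), one_mul]
  exact Fintype.sum_equiv (Equiv.inv G) _ _ fun h => by simp only [Equiv.inv_apply, heven]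

end

theorem stmt15_general {G : Type*} [Group G] [Fintype G] [DecidableEq G] (c : G)
    (hc2 : c * c = 1) (hc1 : c ≠ 1)
    (a : G → ℚ) (hanti : ∀ g : G, a (c * g) = -a g)
    (heven : ∀ g : G, a g⁻¹ = a g) :
    a ∈ Submodule.span ℚ
      {f : G → ℚ | ∃ σ τ : G, f = fun g => bQ c σ τ g + bQ c τ σ g} := by
  have hcinv : c⁻¹ = c := inv_eq_of_mul_eq_one_right hc2
  have hdecomp : (4 : ℚ) • a = ∑ h, a h • fun g => bQ c 1 h g + bQ c h 1 g := by
    funext g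
    simp only [Pi.smul_apply, Finset.sum_apply, smul_eq_mul, mul_add, Finset.sum_add_distrib,
      sum_mul_bQ_one_right_of_even heven, sum_mul_bQ_one hc1, hcinv, hanti]
    ring
  rw [← Submodule.smul_mem_iff _ (four_ne_zero' ℚ), hdecomp]
  exact Submodule.sum_mem _ fun h _ =>
    Submodule.smul_mem _ _ (Submodule.subset_span ⟨1, h, rfl⟩)

theorem stmt15 {G : Type*} [Group G] [Fintype G] [DecidableEq G] (c : G)
    (hcentral : ∀ x : G, c * x = x * c) (hc2 : c * c = 1) (hc1 : c ≠ 1)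
    (a : G → ℚ) (hanti : ∀ g : G, a (c * g) = -a g)
    (heven : ∀ g : G, a g⁻¹ = a g) :
    a ∈ Submodule.span ℚ
      {f : G → ℚ | ∃ σ τ : G, f = fun g => bQ c σ τ g + bQ c τ σ g} :=
  stmt15_general c hc2 hc1 a hanti heven
end
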